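/- Iteration-count theorem for asynchronous SGD (deterministic form): under the assumptions of the combined recursion with a₀ = ‖w⁰ - w*‖² ≤ D, for any ε with ε > 2ηM²g(τ)/m where g(τ) = 1 + 2ηmτ² + 2τ, we have ‖wᵏ - w*‖² ≤ ε for all k ≥ (1/(ηm))·log(2D/ε). -/

import Mathlib

/-!
Unrolling the recursion `aⱼ₊₁ ≤ (1 - ηm) aⱼ + η²M²g(τ)` around its fixed point
`S = ηM²g(τ)/m < ε/2` gives `aₖ ≤ S + (1 - ηm)ᵏ D`, and
`(1 - ηm)ᵏ ≤ e^{-kηm} ≤ ε/(2D)` as soon as `kηm ≥ log(2D/ε)`.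
-/

open Real MeasureTheory

local notation "⟪" x ", " y "⟫" => @inner ℝ _ _ x y

theorem le_add_pow_mul_sub_of_le_mul_add {a : ℕ → ℝ} {q c S : ℝ} (hq : 0 ≤ q)
    (hS : q * S + c ≤ S) (h : ∀ j, a (j + 1) ≤ q * a j + c) (k : ℕ) :
    a k ≤ S + q ^ k * (a 0 - S) := by
  induction k with
  | zero => simp
  | succ k ih =>
    calc a (k + 1) ≤ q * a k + c := h k
      _ ≤ q * (S + q ^ k * (a 0 - S)) + c := by gcongr
      _ = (q * S + c) + q ^ (k + 1) * (a 0 - S) := by ring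
      _ ≤ S + q ^ (k + 1) * (a 0 - S) := by gcongr

theorem one_sub_pow_le_inv_of_log_le_mul {x A : ℝ} {k : ℕ} (hx : x ≤ 1) (hA : 0 < A)
    (hk : log A ≤ k * x) : (1 - x) ^ k ≤ A⁻¹ :=
  calc (1 - x) ^ k ≤ exp (-x) ^ k := pow_le_pow_left₀ (by linarith) (one_sub_le_exp_neg x) k
    _ = exp (-(k * x)) := by rw [← exp_nat_mul]; ring_nf
    _ ≤ exp (-log A) := by gcongr
    _ = A⁻¹ := by rw [exp_neg, exp_log hA]

theorem stmt16_general (n : ℕ) (m η M D ε : ℝ) (τ : ℕ)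
    (hm : 0 < m) (hη : 0 < η) (hηm : η * m < 1) (hD : 0 < D)
    (w : ℕ → EuclideanSpace ℝ (Fin n)) (wstar : EuclideanSpace ℝ (Fin n))
    (hrec : ∀ j, ‖w (j + 1) - wstar‖ ^ 2 ≤ (1 - η * m) * ‖w j - wstar‖ ^ 2
      + η ^ 2 * M ^ 2 * (1 + 2 * η * m * τ ^ 2 + 2 * τ))
    (h0 : ‖w 0 - wstar‖ ^ 2 ≤ D)
    (hε : ε > 2 * η * M ^ 2 * (1 + 2 * η * m * τ ^ 2 + 2 * τ) / m) :
    ∀ k : ℕ, (k : ℝ) ≥ 1 / (η * m) * Real.log (2 * D / ε) → ‖w k - wstar‖ ^ 2 ≤ ε := by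
  intro k hk
  set g : ℝ := 1 + 2 * η * m * τ ^ 2 + 2 * τ
  set S := η * M ^ 2 * g / m
  have hS : 0 ≤ S := by positivity
  have hSε : S < ε / 2 := by linarith [show 2 * η * M ^ 2 * g / m = 2 * S by ring]
  have hε0 : 0 < ε := by linarith
  have hfix : (1 - η * m) * S + η ^ 2 * M ^ 2 * g ≤ S := by
    apply le_of_eq; simp only [S]; field_simp; ring
  have hdecay : (1 - η * m) ^ k ≤ (2 * D / ε)⁻¹ := by
    refine one_sub_pow_le_inv_of_log_le_mul hηm.le (by positivity) ?_
    rwa [ge_iff_le, one_div_mul_eq_div, div_le_iff₀ (by positivity)] at hk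
  calc ‖w k - wstar‖ ^ 2 ≤ S + (1 - η * m) ^ k * (‖w 0 - wstar‖ ^ 2 - S) :=
        le_add_pow_mul_sub_of_le_mul_add (a := fun j ↦ ‖w j - wstar‖ ^ 2) (by linarith) hfix hrec k
    _ ≤ S + (1 - η * m) ^ k * D := by gcongr; linarith
    _ ≤ S + (2 * D / ε)⁻¹ * D := by gcongr
    _ = S + ε / 2 := by field_simp
    _ ≤ ε := by linarith

theorem stmt16 (n : ℕ) (m η M D ε : ℝ) (τ : ℕ)
    (hm : 0 < m) (hη : 0 < η) (hηm : η * m < 1) (hM : 0 ≤ M) (hD : 0 < D)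
    (w : ℕ → EuclideanSpace ℝ (Fin n)) (wstar : EuclideanSpace ℝ (Fin n))
    (hrec : ∀ j, ‖w (j + 1) - wstar‖ ^ 2 ≤ (1 - η * m) * ‖w j - wstar‖ ^ 2
      + η ^ 2 * M ^ 2 * (1 + 2 * η * m * τ ^ 2 + 2 * τ))
    (h0 : ‖w 0 - wstar‖ ^ 2 ≤ D)
    (hε : ε > 2 * η * M ^ 2 * (1 + 2 * η * m * τ ^ 2 + 2 * τ) / m) :
    ∀ k : ℕ, (k : ℝ) ≥ 1 / (η * m) * Real.log (2 * D / ε) → ‖w k - wstar‖ ^ 2 ≤ ε :=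
  stmt16_general n m η M D ε τ hm hη hηm hD w wstar hrec h0 hε
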